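/- arXiv:2409.07666 — 2 statements merged into one kernel-verified Lean document; each statement's English description precedes it below -/
import Mathlib

section
/- (Lemma BRL, equivalence of statements 2 and 3; extended bounded-real LMI) Let A ∈ ℝ^{n×n}, B_v ∈ ℝ^{n×m}, C ∈ ℝ^{l×n}, D_w ∈ ℝ^{l×m} and γ > 0. Then there exists P ≻ 0 such that the symmetric 4×4 block matrix [[−P⁻¹, A, B_v, 0], [Aᵀ, −P, 0, Cᵀ], [B_vᵀ, 0, −γI_m, D_wᵀ], [0, C, D_w, −γI_l]] ≺ 0 if and only if there exist P ≻ 0 and G ∈ ℝ^{n×n} such that [[−P, AG, B_v, 0], [GᵀAᵀ, P−G−Gᵀ, 0, GᵀCᵀ], [B_vᵀ, 0, −γI_m, D_wᵀ], [0, CG, D_w, −γI_l]] ≺ 0. -/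
/-!
Both directions are congruences by `diag(I, T, I, I)`, which scales the second block row and
column by `T`. Forwards, `T = P⁻¹` turns the first LMI into the second with `P⁻¹` in place of
`P` and `G = P⁻¹`. Backwards, the block `P - G - Gᵀ ≺ 0` gives `G + Gᵀ ≻ P ≻ 0`, so `G` is
invertible and `T = G⁻¹` yields the first LMI except that `-P⁻¹` is replaced by
`S = G⁻ᵀ (P - G - Gᵀ) G⁻¹`. Since `S + P⁻¹ = (G⁻¹ - P⁻¹)ᵀ P (G⁻¹ - P⁻¹) ⪰ 0`, lowering that
block from `S` to `-P⁻¹` keeps the matrix negative definite.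
-/

open Matrix

/-- `X ≺ 0`: negative definiteness. -/
def NegDef {m : Type*} [Fintype m] (X : Matrix m m ℝ) : Prop := (-X).PosDef

section
variable {n k : Type*} [Fintype n] [Fintype k]

lemma NegDef.of_fromBlocks₂₂ {A : Matrix n n ℝ} {B : Matrix n k ℝ} {C : Matrix k n ℝ}
    {D : Matrix k k ℝ} (h : NegDef (fromBlocks A B C D)) : NegDef D :=
  PosDef.submatrix h Sum.inr_injective

lemma NegDef.of_fromBlocks₁₁ {A : Matrix n n ℝ} {B : Matrix n k ℝ} {C : Matrix k n ℝ}
    {D : Matrix k k ℝ} (h : NegDef (fromBlocks A B C D)) : NegDef A :=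
  PosDef.submatrix h Sum.inl_injective

lemma NegDef.of_posSemidef_sub {M N : Matrix n n ℝ} (hM : NegDef M) (h : (M - N).PosSemidef) :
    NegDef N := by
  unfold NegDef
  convert PosDef.add_posSemidef hM h using 1
  abel

lemma Matrix.PosSemidef.fromBlocks_zero {A : Matrix n n ℝ} {D : Matrix k k ℝ}
    (hA : A.PosSemidef) (hD : D.PosSemidef) : (fromBlocks A 0 0 D).PosSemidef := by
  refine .of_dotProduct_mulVec_nonneg (hA.1.fromBlocks (by simp) hD.1) fun x ↦ ?_
  obtain ⟨x₁, x₂, rfl⟩ : ∃ x₁ x₂, x = Sum.elim x₁ x₂ := ⟨_, _, (Sum.elim_comp_inl_inr x).symm⟩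
  simpa [fromBlocks_mulVec] using
    add_nonneg (hA.dotProduct_mulVec_nonneg x₁) (hD.dotProduct_mulVec_nonneg x₂)

variable [DecidableEq n]

lemma NegDef.transpose_mul_mul_same {M T : Matrix n n ℝ} (hM : NegDef M) (hT : IsUnit T) :
    NegDef (Tᵀ * M * T) := by
  have h := PosDef.conjTranspose_mul_mul_same hM (mulVec_injective_iff_isUnit.mpr hT)
  rwa [conjTranspose_eq_transpose_of_trivial, Matrix.mul_neg, Matrix.neg_mul] at h

lemma isUnit_of_posDef_add_transpose {G : Matrix n n ℝ} (h : (G + Gᵀ).PosDef) : IsUnit G := by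
  refine mulVec_injective_iff_isUnit.mp <| (injective_iff_map_eq_zero' (mulVecLin G)).mpr ?_
  intro x
  refine ⟨fun hx ↦ ?_, fun hx ↦ by simp [hx]⟩
  by_contra hne
  have hpos := h.dotProduct_mulVec_pos hne
  have hGx : G *ᵥ x = 0 := hx
  rw [star_trivial, add_mulVec, dotProduct_add, mulVec_transpose, dotProduct_comm x (x ᵥ* G),
    ← dotProduct_mulVec, hGx, dotProduct_zero, add_zero] at hpos
  exact hpos.false

end

lemma transpose_inv_mul_sub_mul_inv_add_inv {α n : Type*} [Fintype n] [DecidableEq n] [CommRing α]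
    {P G : Matrix n n α} (hP : IsUnit P) (hPT : Pᵀ = P) (hG : IsUnit G) :
    G⁻¹ᵀ * (P - G - Gᵀ) * G⁻¹ + P⁻¹ = (G⁻¹ - P⁻¹)ᵀ * P * (G⁻¹ - P⁻¹) := by
  have hG' : IsUnit Gᵀ := (isUnit_transpose G).mpr hG
  simp only [transpose_sub, transpose_nonsing_inv, hPT, Matrix.sub_mul, Matrix.mul_sub,
    Matrix.mul_assoc, mul_nonsing_inv _ ((isUnit_iff_isUnit_det G).mp hG),
    mul_nonsing_inv _ ((isUnit_iff_isUnit_det P).mp hP)]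
  simp only [← Matrix.mul_assoc, nonsing_inv_mul _ ((isUnit_iff_isUnit_det P).mp hP),
    nonsing_inv_mul _ ((isUnit_iff_isUnit_det _).mp hG'), Matrix.one_mul, Matrix.mul_one]
  abel

def blockLMI {n m l : Type*} (B : Matrix n m ℝ) (R : Matrix (m ⊕ l) (m ⊕ l) ℝ)
    (X₁₁ X₁₂ X₂₂ : Matrix n n ℝ) (E : Matrix l n ℝ) :
    Matrix ((n ⊕ n) ⊕ (m ⊕ l)) ((n ⊕ n) ⊕ (m ⊕ l)) ℝ :=
  fromBlocks (fromBlocks X₁₁ X₁₂ X₁₂ᵀ X₂₂) (fromBlocks B 0 0 Eᵀ) (fromBlocks Bᵀ 0 0 E) R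

def scaleSecond {n m l : Type*} [DecidableEq n] [DecidableEq m] [DecidableEq l]
    (T : Matrix n n ℝ) : Matrix ((n ⊕ n) ⊕ (m ⊕ l)) ((n ⊕ n) ⊕ (m ⊕ l)) ℝ :=
  fromBlocks (fromBlocks 1 0 0 T) 0 0 1

section
variable {n m l : Type*} {B : Matrix n m ℝ} {R : Matrix (m ⊕ l) (m ⊕ l) ℝ}

lemma blockLMI_sub_blockLMI (X₁₁ X₁₂ X₂₂ Y₂₂ : Matrix n n ℝ) (E : Matrix l n ℝ) :
    blockLMI B R X₁₁ X₁₂ X₂₂ E - blockLMI B R X₁₁ X₁₂ Y₂₂ E =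
      fromBlocks (fromBlocks 0 0 0 (X₂₂ - Y₂₂)) 0 0 0 := by
  simp [blockLMI, sub_eq_add_neg, fromBlocks_neg, fromBlocks_add]

variable [Fintype n] [Fintype m] [Fintype l]

lemma NegDef.blockLMI_of_posSemidef_sub {X₁₁ X₁₂ X₂₂ Y₂₂ : Matrix n n ℝ} {E : Matrix l n ℝ}
    (hM : NegDef (blockLMI B R X₁₁ X₁₂ X₂₂ E)) (h : (X₂₂ - Y₂₂).PosSemidef) :
    NegDef (blockLMI B R X₁₁ X₁₂ Y₂₂ E) := by
  refine hM.of_posSemidef_sub ?_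
  rw [blockLMI_sub_blockLMI]
  exact .fromBlocks_zero (.fromBlocks_zero .zero h) .zero

variable [DecidableEq n] [DecidableEq m] [DecidableEq l]

lemma isUnit_scaleSecond {T : Matrix n n ℝ} (hT : IsUnit T) :
    IsUnit (scaleSecond (m := m) (l := l) T) := by
  simp [scaleSecond, isUnit_fromBlocks_zero₂₁, hT]

lemma transpose_scaleSecond_mul_blockLMI_mul (X₁₁ X₁₂ X₂₂ T : Matrix n n ℝ) (E : Matrix l n ℝ) :
    (scaleSecond T)ᵀ * blockLMI B R X₁₁ X₁₂ X₂₂ E * scaleSecond T =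
      blockLMI B R X₁₁ (X₁₂ * T) (Tᵀ * X₂₂ * T) (E * T) := by
  simp [scaleSecond, blockLMI, fromBlocks_transpose, fromBlocks_multiply, transpose_mul]

lemma negDef_blockLMI_extended_inv {P A : Matrix n n ℝ} {C : Matrix l n ℝ} (hP : P.PosDef)
    (hM : NegDef (blockLMI B R (-P⁻¹) A (-P) C)) :
    NegDef (blockLMI B R (-P⁻¹) (A * P⁻¹) (P⁻¹ - P⁻¹ - P⁻¹ᵀ) (C * P⁻¹)) := by
  have hPinvT : P⁻¹ᵀ = P⁻¹ := by simpa [conjTranspose_eq_transpose_of_trivial] using hP.inv.1.eq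
  have h := hM.transpose_mul_mul_same (isUnit_scaleSecond (m := m) (l := l) hP.inv.isUnit)
  rw [transpose_scaleSecond_mul_blockLMI_mul] at h
  convert h using 2
  rw [hPinvT, Matrix.mul_neg, Matrix.neg_mul,
    nonsing_inv_mul _ ((isUnit_iff_isUnit_det P).mp hP.isUnit), Matrix.one_mul, sub_self, zero_sub]

lemma negDef_blockLMI_of_extended {P G A : Matrix n n ℝ} {C : Matrix l n ℝ} (hP : P.PosDef)
    (hM : NegDef (blockLMI B R (-P) (A * G) (P - G - Gᵀ) (C * G))) :
    NegDef (blockLMI B R (-P) A (-P⁻¹) C) := by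
  have hGG : (G + Gᵀ).PosDef := by
    have h : NegDef (P - G - Gᵀ) := hM.of_fromBlocks₁₁.of_fromBlocks₂₂
    have := h.add hP
    rwa [show -(P - G - Gᵀ) + P = G + Gᵀ by abel] at this
  have hG : IsUnit G := isUnit_of_posDef_add_transpose hGG
  have hN := hM.transpose_mul_mul_same
    (isUnit_scaleSecond (m := m) (l := l) (isUnit_nonsing_inv_iff.mpr hG))
  rw [transpose_scaleSecond_mul_blockLMI_mul,
    mul_nonsing_inv_cancel_right _ _ ((isUnit_iff_isUnit_det G).mp hG),
    mul_nonsing_inv_cancel_right _ _ ((isUnit_iff_isUnit_det G).mp hG)] at hN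
  refine hN.blockLMI_of_posSemidef_sub ?_
  have hPT : Pᵀ = P := by simpa [conjTranspose_eq_transpose_of_trivial] using hP.1.eq
  rw [sub_neg_eq_add, transpose_inv_mul_sub_mul_inv_add_inv hP.isUnit hPT hG,
    ← conjTranspose_eq_transpose_of_trivial]
  exact hP.posSemidef.conjTranspose_mul_mul_same _

theorem exists_negDef_blockLMI_iff (A : Matrix n n ℝ) (C : Matrix l n ℝ) :
    (∃ P : Matrix n n ℝ, P.PosDef ∧ NegDef (blockLMI B R (-P⁻¹) A (-P) C)) ↔
      ∃ P G : Matrix n n ℝ, P.PosDef ∧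
        NegDef (blockLMI B R (-P) (A * G) (P - G - Gᵀ) (C * G)) := by
  constructor
  · rintro ⟨P, hP, hM⟩
    exact ⟨P⁻¹, P⁻¹, hP.inv, negDef_blockLMI_extended_inv hP hM⟩
  · rintro ⟨P, G, hP, hM⟩
    refine ⟨P⁻¹, hP.inv, ?_⟩
    rw [nonsing_inv_nonsing_inv _ ((isUnit_iff_isUnit_det P).mp hP.isUnit)]
    exact negDef_blockLMI_of_extended hP hM

end

theorem stmt14_general {n m l : ℕ} (A : Matrix (Fin n) (Fin n) ℝ) (Bv : Matrix (Fin n) (Fin m) ℝ)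
    (C : Matrix (Fin l) (Fin n) ℝ) (Dw : Matrix (Fin l) (Fin m) ℝ) (γ : ℝ) :
    (∃ P : Matrix (Fin n) (Fin n) ℝ, P.PosDef ∧
      NegDef (fromBlocks
        (fromBlocks (-(P⁻¹)) A Aᵀ (-P))
        (fromBlocks Bv 0 0 Cᵀ)
        (fromBlocks Bvᵀ 0 0 C)
        (fromBlocks (-(γ • (1 : Matrix (Fin m) (Fin m) ℝ))) Dwᵀ Dw
          (-(γ • (1 : Matrix (Fin l) (Fin l) ℝ)))))) ↔
    (∃ P G : Matrix (Fin n) (Fin n) ℝ, P.PosDef ∧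
      NegDef (fromBlocks
        (fromBlocks (-P) (A * G) (Gᵀ * Aᵀ) (P - G - Gᵀ))
        (fromBlocks Bv 0 0 (Gᵀ * Cᵀ))
        (fromBlocks Bvᵀ 0 0 (C * G))
        (fromBlocks (-(γ • (1 : Matrix (Fin m) (Fin m) ℝ))) Dwᵀ Dw
          (-(γ • (1 : Matrix (Fin l) (Fin l) ℝ)))))) := by
  simpa only [blockLMI, transpose_mul] using
    exists_negDef_blockLMI_iff (B := Bv)
      (R := fromBlocks (-(γ • 1)) Dwᵀ Dw (-(γ • 1))) A C

/-- Bounded real lemma, equivalence of statements 2 and 3 (extended bounded-real LMI). -/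
theorem stmt14 {n m l : ℕ} (A : Matrix (Fin n) (Fin n) ℝ) (Bv : Matrix (Fin n) (Fin m) ℝ)
    (C : Matrix (Fin l) (Fin n) ℝ) (Dw : Matrix (Fin l) (Fin m) ℝ) (γ : ℝ) (hγ : 0 < γ) :
    (∃ P : Matrix (Fin n) (Fin n) ℝ, P.PosDef ∧
      NegDef (fromBlocks
        (fromBlocks (-(P⁻¹)) A Aᵀ (-P))
        (fromBlocks Bv 0 0 Cᵀ)
        (fromBlocks Bvᵀ 0 0 C)
        (fromBlocks (-(γ • (1 : Matrix (Fin m) (Fin m) ℝ))) Dwᵀ Dw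
          (-(γ • (1 : Matrix (Fin l) (Fin l) ℝ)))))) ↔
    (∃ P G : Matrix (Fin n) (Fin n) ℝ, P.PosDef ∧
      NegDef (fromBlocks
        (fromBlocks (-P) (A * G) (Gᵀ * Aᵀ) (P - G - Gᵀ))
        (fromBlocks Bv 0 0 (Gᵀ * Cᵀ))
        (fromBlocks Bvᵀ 0 0 (C * G))
        (fromBlocks (-(γ • (1 : Matrix (Fin m) (Fin m) ℝ))) Dwᵀ Dw
          (-(γ • (1 : Matrix (Fin l) (Fin l) ℝ)))))) :=
  stmt14_general A Bv C Dw γ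
end

section
/- (Lemma 7, second inclusion) Every element of 𝒦_ext^{∞,γ} belongs to 𝒦_all^{∞,γ}: if Z ∈ 𝒮, Q ≻ 0, and G = blkdiag(G_1,…,G_N) is invertible and satisfies the 𝒦_ext^{∞,γ} LMI, then K = ZG⁻¹ satisfies K ∈ 𝒮 and there exists P ≻ 0 such that [[−P⁻¹, A+BK, B_v, 0], [(A+BK)ᵀ, −P, 0, (C+DK)ᵀ], [B_vᵀ, 0, −γI_{m_v}, D_wᵀ], [0, C+DK, D_w, −γI_l]] ≺ 0. -/
open Matrix

/-- Block index set: `Idx dims` indexes the rows/columns of an `n × n` matrix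
partitioned into blocks of sizes `dims 0, …, dims (N-1)`. -/
abbrev Idx {N : ℕ} (dims : Fin N → ℕ) : Type := Σ i : Fin N, Fin (dims i)

/-- The sparsity set `𝒮`: the `(i,j)` block vanishes whenever `i ≠ j` and `(i,j) ∉ ℰ`. -/
def Sparse {N : ℕ} (Gr : SimpleGraph (Fin N)) (dims : Fin N → ℕ)
    (K : Matrix (Idx dims) (Idx dims) ℝ) : Prop :=
  ∀ i j : Fin N, i ≠ j → ¬ Gr.Adj i j →
    ∀ (a : Fin (dims i)) (b : Fin (dims j)), K ⟨i, a⟩ ⟨j, b⟩ = 0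

/-- Block-diagonal (w.r.t. the partition `dims`): off-diagonal blocks vanish. -/
def BlkDiag {N : ℕ} (dims : Fin N → ℕ) (K : Matrix (Idx dims) (Idx dims) ℝ) : Prop :=
  ∀ p r : Idx dims, p.1 ≠ r.1 → K p r = 0

/-- The `𝒦_ext^{∞,γ}` LMI matrix. -/
noncomputable def ExtInfLMI {N mv l : ℕ} (dims : Fin N → ℕ)
    (A B : Matrix (Idx dims) (Idx dims) ℝ) (Bv : Matrix (Idx dims) (Fin mv) ℝ)
    (Cm Dm : Matrix (Fin l) (Idx dims) ℝ) (Dw : Matrix (Fin l) (Fin mv) ℝ) (γ : ℝ)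
    (Z Qm Gm : Matrix (Idx dims) (Idx dims) ℝ) :
    Matrix ((Idx dims ⊕ Idx dims) ⊕ (Fin mv ⊕ Fin l))
      ((Idx dims ⊕ Idx dims) ⊕ (Fin mv ⊕ Fin l)) ℝ :=
  fromBlocks
    (fromBlocks (-Qm) (A * Gm + B * Z) (A * Gm + B * Z)ᵀ (Qm - Gm - Gmᵀ))
    (fromBlocks Bv 0 0 (Cm * Gm + Dm * Z)ᵀ)
    (fromBlocks Bvᵀ 0 0 (Cm * Gm + Dm * Z))
    (fromBlocks (-(γ • (1 : Matrix (Fin mv) (Fin mv) ℝ))) Dwᵀ Dw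
      (-(γ • (1 : Matrix (Fin l) (Fin l) ℝ))))

/-- The closed-loop bounded-real LMI matrix
`[[−P⁻¹, A+BK, B_v, 0], [(A+BK)ᵀ, −P, 0, (C+DK)ᵀ], [B_vᵀ, 0, −γI, D_wᵀ], [0, C+DK, D_w, −γI]]`. -/
noncomputable def BRLclosed {N mv l : ℕ} (dims : Fin N → ℕ)
    (A B : Matrix (Idx dims) (Idx dims) ℝ) (Bv : Matrix (Idx dims) (Fin mv) ℝ)
    (Cm Dm : Matrix (Fin l) (Idx dims) ℝ) (Dw : Matrix (Fin l) (Fin mv) ℝ) (γ : ℝ)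
    (K P : Matrix (Idx dims) (Idx dims) ℝ) :
    Matrix ((Idx dims ⊕ Idx dims) ⊕ (Fin mv ⊕ Fin l))
      ((Idx dims ⊕ Idx dims) ⊕ (Fin mv ⊕ Fin l)) ℝ :=
  fromBlocks
    (fromBlocks (-(P⁻¹)) (A + B * K) (A + B * K)ᵀ (-P))
    (fromBlocks Bv 0 0 (Cm + Dm * K)ᵀ)
    (fromBlocks Bvᵀ 0 0 (Cm + Dm * K))
    (fromBlocks (-(γ • (1 : Matrix (Fin mv) (Fin mv) ℝ))) Dwᵀ Dw
      (-(γ • (1 : Matrix (Fin l) (Fin l) ℝ))))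

/-!
The change of variables `P = Q⁻¹` works: completing the square gives
`Q - G - Gᵀ = (G - Q)ᵀ Q⁻¹ (G - Q) - Gᵀ Q⁻¹ G ⪰ -Gᵀ Q⁻¹ G`, so the `𝒦_ext` LMI dominates, in the
Loewner order, the congruence `Sᵀ M S` of the closed-loop matrix `M` for `K = Z G⁻¹`, `P = Q⁻¹`, by
`S = diag(I, G, I, I)`; since `S` is invertible, `M ≺ 0`. Sparsity of `K` holds because `G⁻¹` is
block diagonal along with `G`.
-/

theorem Matrix.PosSemidef.fromBlocks_zero₁₂_zero₂₁ {m n R : Type*} [Fintype m] [Fintype n]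
    [CommRing R] [PartialOrder R] [StarRing R] [IsOrderedAddMonoid R]
    {A : Matrix m m R} {D : Matrix n n R} (hA : A.PosSemidef) (hD : D.PosSemidef) :
    (fromBlocks A 0 0 D).PosSemidef := by
  rw [posSemidef_iff_dotProduct_mulVec] at hA hD ⊢
  refine ⟨hA.1.fromBlocks (by simp) hD.1, fun x => ?_⟩
  rw [← Sum.elim_comp_inl_inr x]
  simp only [fromBlocks_mulVec, dotProduct_block, Sum.elim_comp_inl, Sum.elim_comp_inr,
    zero_mulVec, add_zero, zero_add]
  exact add_nonneg (hA.2 (x ∘ Sum.inl)) (hD.2 (x ∘ Sum.inr))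

theorem Matrix.sub_sub_transpose_eq {n R : Type*} [Fintype n] [DecidableEq n] [CommRing R]
    {Q : Matrix n n R} (G : Matrix n n R) (hQ : Q.IsSymm) (hQu : IsUnit Q) :
    Q - G - Gᵀ = (G - Q)ᵀ * Q⁻¹ * (G - Q) - Gᵀ * Q⁻¹ * G := by
  have hQQ : Q * Q⁻¹ = 1 := mul_nonsing_inv Q ((isUnit_iff_isUnit_det Q).mp hQu)
  have hQQ' : Q⁻¹ * Q = 1 := nonsing_inv_mul Q ((isUnit_iff_isUnit_det Q).mp hQu)
  rw [transpose_sub, hQ.eq]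
  simp only [sub_mul, mul_sub, Matrix.mul_assoc, hQQ', hQQ, mul_one, one_mul]
  abel

section NegDef

variable {m : Type*} [Fintype m] {X : Matrix m m ℝ}

theorem NegDef.of_add_posSemidef {F : Matrix m m ℝ} (hXF : NegDef (X + F))
    (hF : F.PosSemidef) : NegDef X := by
  simpa [NegDef] using hXF.add_posSemidef hF

theorem NegDef.of_transpose_mul_mul_same [DecidableEq m] {S : Matrix m m ℝ} (hS : IsUnit S)
    (h : NegDef (Sᵀ * X * S)) : NegDef X := by
  rw [NegDef, ← hS.posDef_star_left_conjugate_iff, star_eq_conjTranspose,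
    conjTranspose_eq_transpose_of_trivial, Matrix.mul_neg, Matrix.neg_mul]
  exact h

end NegDef

section BlkDiag

variable {N : ℕ} {dims : Fin N → ℕ}

theorem blkDiag_iff_blockTriangular {G : Matrix (Idx dims) (Idx dims) ℝ} :
    BlkDiag dims G ↔
      G.BlockTriangular Sigma.fst ∧ G.BlockTriangular (OrderDual.toDual ∘ Sigma.fst) := by
  refine ⟨fun h => ⟨fun p r hrp => h p r hrp.ne', fun p r hpr => h p r hpr.ne'⟩,
    fun ⟨hl, hu⟩ p r hpr => ?_⟩
  rcases hpr.lt_or_gt with hpr | hrp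
  · exact hu hpr
  · exact hl hrp

theorem BlkDiag.inv {G : Matrix (Idx dims) (Idx dims) ℝ} (hG : BlkDiag dims G) (hGu : IsUnit G) :
    BlkDiag dims G⁻¹ := by
  have := hGu.invertible
  obtain ⟨hl, hu⟩ := blkDiag_iff_blockTriangular.mp hG
  exact blkDiag_iff_blockTriangular.mpr
    ⟨blockTriangular_inv_of_blockTriangular hl, blockTriangular_inv_of_blockTriangular hu⟩

theorem Sparse.mul_blkDiag {Gr : SimpleGraph (Fin N)} {Z H : Matrix (Idx dims) (Idx dims) ℝ}
    (hZ : Sparse Gr dims Z) (hH : BlkDiag dims H) : Sparse Gr dims (Z * H) := by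
  intro i j hij hadj a b
  rw [mul_apply]
  refine Finset.sum_eq_zero fun ⟨k, c⟩ _ => ?_
  by_cases hk : k = j
  · subst hk
    rw [hZ i k hij hadj a c, zero_mul]
  · rw [hH ⟨k, c⟩ ⟨j, b⟩ hk, mul_zero]

end BlkDiag

theorem extInfLMI_eq_transpose_mul_BRLclosed_mul_add {N mv l : ℕ} (dims : Fin N → ℕ)
    (A B : Matrix (Idx dims) (Idx dims) ℝ) (Bv : Matrix (Idx dims) (Fin mv) ℝ)
    (Cm Dm : Matrix (Fin l) (Idx dims) ℝ) (Dw : Matrix (Fin l) (Fin mv) ℝ) (γ : ℝ)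
    (Z : Matrix (Idx dims) (Idx dims) ℝ) {Q G : Matrix (Idx dims) (Idx dims) ℝ}
    (hQ : Q.IsSymm) (hQu : IsUnit Q) (hGu : IsUnit G) :
    ExtInfLMI dims A B Bv Cm Dm Dw γ Z Q G =
      (fromBlocks (fromBlocks 1 0 0 G) 0 0 1)ᵀ * BRLclosed dims A B Bv Cm Dm Dw γ (Z * G⁻¹) Q⁻¹ *
          fromBlocks (fromBlocks 1 0 0 G) 0 0 1 +
        fromBlocks (fromBlocks 0 0 0 ((G - Q)ᵀ * Q⁻¹ * (G - Q))) 0 0 0 := by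
  have hGG : G⁻¹ * G = 1 := nonsing_inv_mul G ((isUnit_iff_isUnit_det G).mp hGu)
  have hK : ∀ {r : Type} (X Y : Matrix r (Idx dims) ℝ),
      (X + Y * (Z * G⁻¹)) * G = X * G + Y * Z := by
    intro r X Y
    rw [Matrix.add_mul, Matrix.mul_assoc, Matrix.mul_assoc, hGG, Matrix.mul_one]
  rw [ExtInfLMI, BRLclosed, nonsing_inv_nonsing_inv Q ((isUnit_iff_isUnit_det Q).mp hQu),
    sub_sub_transpose_eq G hQ hQu]
  simp only [fromBlocks_transpose, fromBlocks_multiply, fromBlocks_add, transpose_one,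
    transpose_zero, Matrix.mul_one, Matrix.one_mul, Matrix.mul_zero, Matrix.zero_mul, add_zero,
    zero_add, ← transpose_mul, hK, Matrix.mul_neg, Matrix.neg_mul, neg_zero, neg_add_eq_sub]

theorem stmt16_general {N mv l : ℕ} (Gr : SimpleGraph (Fin N)) (dims : Fin N → ℕ)
    (A B : Matrix (Idx dims) (Idx dims) ℝ) (Bv : Matrix (Idx dims) (Fin mv) ℝ)
    (Cm Dm : Matrix (Fin l) (Idx dims) ℝ) (Dw : Matrix (Fin l) (Fin mv) ℝ)
    (γ : ℝ)
    (Z Qm Gm : Matrix (Idx dims) (Idx dims) ℝ)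
    (hZ : Sparse Gr dims Z) (hQpd : Qm.PosDef) (hGbd : BlkDiag dims Gm) (hGu : IsUnit Gm)
    (hLMI : NegDef (ExtInfLMI dims A B Bv Cm Dm Dw γ Z Qm Gm)) :
    Sparse Gr dims (Z * Gm⁻¹) ∧
      ∃ P : Matrix (Idx dims) (Idx dims) ℝ, P.PosDef ∧
        NegDef (BRLclosed dims A B Bv Cm Dm Dw γ (Z * Gm⁻¹) P) := by
  refine ⟨hZ.mul_blkDiag (hGbd.inv hGu), Qm⁻¹, hQpd.inv, ?_⟩
  have hQ : Qm.IsSymm := isHermitian_iff_isSymm.mp hQpd.isHermitian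
  have hSquare : ((Gm - Qm)ᵀ * Qm⁻¹ * (Gm - Qm)).PosSemidef := by
    simpa using hQpd.inv.posSemidef.conjTranspose_mul_mul_same (Gm - Qm)
  have hS : IsUnit (fromBlocks (fromBlocks (1 : Matrix (Idx dims) (Idx dims) ℝ) 0 0 Gm) 0 0
      (1 : Matrix (Fin mv ⊕ Fin l) (Fin mv ⊕ Fin l) ℝ)) :=
    isUnit_fromBlocks_zero₂₁.mpr ⟨isUnit_fromBlocks_zero₂₁.mpr ⟨isUnit_one, hGu⟩, isUnit_one⟩
  rw [extInfLMI_eq_transpose_mul_BRLclosed_mul_add dims A B Bv Cm Dm Dw γ Z hQ hQpd.isUnit hGu]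
    at hLMI
  exact (hLMI.of_add_posSemidef (.fromBlocks_zero₁₂_zero₂₁
    (.fromBlocks_zero₁₂_zero₂₁ .zero hSquare) .zero)).of_transpose_mul_mul_same hS

/-- Lemma 7, second inclusion: `𝒦_ext^{∞,γ} ⊆ 𝒦_all^{∞,γ}`. -/
theorem stmt16 {N mv l : ℕ} (Gr : SimpleGraph (Fin N)) (dims : Fin N → ℕ)
    (A B : Matrix (Idx dims) (Idx dims) ℝ) (Bv : Matrix (Idx dims) (Fin mv) ℝ)
    (Cm Dm : Matrix (Fin l) (Idx dims) ℝ) (Dw : Matrix (Fin l) (Fin mv) ℝ)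
    (γ : ℝ) (hγ : 0 < γ)
    (Z Qm Gm : Matrix (Idx dims) (Idx dims) ℝ)
    (hZ : Sparse Gr dims Z) (hQpd : Qm.PosDef) (hGbd : BlkDiag dims Gm) (hGu : IsUnit Gm)
    (hLMI : NegDef (ExtInfLMI dims A B Bv Cm Dm Dw γ Z Qm Gm)) :
    Sparse Gr dims (Z * Gm⁻¹) ∧
      ∃ P : Matrix (Idx dims) (Idx dims) ℝ, P.PosDef ∧
        NegDef (BRLclosed dims A B Bv Cm Dm Dw γ (Z * Gm⁻¹) P) :=
  stmt16_general Gr dims A B Bv Cm Dm Dw γ Z Qm Gm hZ hQpd hGbd hGu hLMI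
end
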